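/- Let (X_n)_{n∈ℕ} be Banach spaces, X their ℓ₁-sum, ε ∈ (0,1), z ∈ B_X, and n ∈ ℕ such that ‖P_n z‖ > 1 − ε, where P_n is the canonical projection onto the first n coordinates. Then for every ordinal α: if z ∈ σ_{3ε}^α(B_X), then P_n z ∈ σ_ε^α(P_n B_X), where the latter derivation is taken in the Banach space (Σ_{k=1}^n X_k)_{ℓ₁} and P_n B_X is its closed unit ball. -/

import Mathlib

open Metric Set Pointwise

noncomputable section

/-- The weak topology on a normed space `X`: the initial topology with respect to all
continuous linear functionals. -/
noncomputable def weakTop (X : Type*) [NormedAddCommGroup X] [NormedSpace ℝ X] :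
    TopologicalSpace X :=
  ⨅ f : X →L[ℝ] ℝ, TopologicalSpace.induced (⇑f) inferInstance

/-- A set is weakly open if it is open for the weak topology. -/
def IsWeaklyOpen {X : Type*} [NormedAddCommGroup X] [NormedSpace ℝ X] (V : Set X) : Prop :=
  @IsOpen X (weakTop X) V

/-- The derived set `σ_ε(K)`: remove from `K` the union of all weakly open sets `V` whose
trace on `K` has (norm) diameter `< ε`. -/
noncomputable def dSet {X : Type*} [NormedAddCommGroup X] [NormedSpace ℝ X] (ε : ℝ)
    (K : Set X) : Set X :=
  K \ ⋃₀ {V : Set X | IsWeaklyOpen V ∧ Metric.diam (V ∩ K) < ε}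

/-- The transfinite iterates `σ_ε^α(K)`: `σ_ε^0(K) = K`, `σ_ε^{α+1}(K) = σ_ε(σ_ε^α(K))`,
and `σ_ε^α(K) = ⋂_{β<α} σ_ε^β(K)` for `α` a limit ordinal. -/
noncomputable def dIter {X : Type*} [NormedAddCommGroup X] [NormedSpace ℝ X] (ε : ℝ)
    (K : Set X) (α : Ordinal.{0}) : Set X :=
  Ordinal.limitRecOn α K (fun _ ih => dSet ε ih)
    (fun o _ ih => ⋂ (β : Ordinal.{0}) (h : β < o), ih β h)

/-- `Φ(X, ε)`: the least ordinal `α` with `σ_ε^α(B_X) = ∅` (junk value `0` if there is none). -/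
noncomputable def PhiEps (X : Type*) [NormedAddCommGroup X] [NormedSpace ℝ X] (ε : ℝ) :
    Ordinal.{0} :=
  sInf {γ : Ordinal.{0} | dIter ε (Metric.closedBall (0 : X) 1) γ = ∅}

/-- `Φ(X, ε)` is well defined, i.e. some derived iterate of the unit ball is empty. -/
def PhiDefinedAt (X : Type*) [NormedAddCommGroup X] [NormedSpace ℝ X] (ε : ℝ) : Prop :=
  ∃ γ : Ordinal.{0}, dIter ε (Metric.closedBall (0 : X) 1) γ = ∅

/-- `Φ(X) < ∞`, i.e. `Φ(X, ε)` is well defined for every `ε > 0`. -/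
def PhiDefined (X : Type*) [NormedAddCommGroup X] [NormedSpace ℝ X] : Prop :=
  ∀ ε : ℝ, 0 < ε → PhiDefinedAt X ε

/-- The weak-fragmentability index `Φ(X) = sup_{ε > 0} Φ(X, ε)`. -/
noncomputable def Phi (X : Type*) [NormedAddCommGroup X] [NormedSpace ℝ X] : Ordinal.{0} :=
  ⨆ ε : {ε : ℝ // 0 < ε}, PhiEps X ε.1


/-- The canonical projection from the `ℓ₁`-sum `(Σ_n X_n)_{ℓ₁}` onto the `ℓ₁`-sum of the
first `n` coordinates. -/
def Pfin (E : ℕ → Type*) [∀ n, NormedAddCommGroup (E n)] (n : ℕ) (z : lp E 1) :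
    PiLp 1 (fun k : Fin n => E k) :=
  (WithLp.equiv 1 (∀ k : Fin n, E k)).symm (fun k => z k)

/-!
A point `u` of the unit ball of the `ℓ₁`-sum with `‖P_n u‖ > 1 - ε` carries less than `ε` of its
norm outside the first `n` coordinates, so two such points satisfy
`‖u - w‖ ≤ ‖P_n u - P_n w‖ + 2ε`. These points form a weakly open set, since the norm is the
supremum of the functionals of norm `≤ 1`. Hence a weakly open `V ∋ P_n z` whose trace on
`σ_ε^α(P_n B_X)` has diameter `< ε` pulls back to a weakly open neighbourhood of `z` whose trace on
`σ_{3ε}^α(B_X)` has diameter `< 3ε`, and the claim follows by transfinite induction on `α`.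
-/

section WeakTopology

variable {X Y : Type*} [NormedAddCommGroup X] [NormedSpace ℝ X]
  [NormedAddCommGroup Y] [NormedSpace ℝ Y]

theorem ContinuousLinearMap.continuous_weakTop_real (g : X →L[ℝ] ℝ) :
    @Continuous X ℝ (weakTop X) _ ⇑g :=
  continuous_iInf_dom continuous_induced_dom

theorem ContinuousLinearMap.continuous_weakTop (T : X →L[ℝ] Y) :
    @Continuous X Y (weakTop X) (weakTop Y) ⇑T :=
  continuous_iInf_rng.2 fun f => continuous_induced_rng.2 (f.comp T).continuous_weakTop_real

theorem IsWeaklyOpen.preimage {V : Set Y} (hV : IsWeaklyOpen V) (T : X →L[ℝ] Y) :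
    IsWeaklyOpen (T ⁻¹' V) :=
  @Continuous.isOpen_preimage X Y (weakTop X) (weakTop Y) T T.continuous_weakTop V hV

theorem IsWeaklyOpen.inter {U V : Set X} (hU : IsWeaklyOpen U) (hV : IsWeaklyOpen V) :
    IsWeaklyOpen (U ∩ V) :=
  @IsOpen.inter X (weakTop X) U V hU hV

theorem isWeaklyOpen_preimage_Ioi (g : X →L[ℝ] ℝ) (r : ℝ) : IsWeaklyOpen (g ⁻¹' Ioi r) :=
  @Continuous.isOpen_preimage X ℝ (weakTop X) _ g g.continuous_weakTop_real _ isOpen_Ioi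

theorem isWeaklyOpen_lt_norm (r : ℝ) : IsWeaklyOpen {y : Y | r < ‖y‖} := by
  have hunion : {y : Y | r < ‖y‖} = ⋃ (g : StrongDual ℝ Y) (_ : ‖g‖ ≤ 1), g ⁻¹' Ioi r := by
    ext y
    simp only [mem_iUnion, mem_preimage, mem_Ioi, exists_prop]
    constructor
    · intro hy
      obtain ⟨g, hg, hgy⟩ := exists_dual_vector'' ℝ y
      exact ⟨g, hg, hgy ▸ hy⟩
    · rintro ⟨g, hg, hgy⟩
      calc r < g y := hgy
        _ ≤ ‖g y‖ := le_abs_self _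
        _ ≤ ‖g‖ * ‖y‖ := g.le_opNorm y
        _ ≤ ‖y‖ := mul_le_of_le_one_left (norm_nonneg y) hg
  rw [IsWeaklyOpen, hunion]
  exact @isOpen_iUnion _ _ (weakTop Y) _ fun g => @isOpen_iUnion _ _ (weakTop Y) _ fun _ =>
    isWeaklyOpen_preimage_Ioi g r

end WeakTopology

section DerivedSets

variable {X : Type*} [NormedAddCommGroup X] [NormedSpace ℝ X]

theorem dIter_zero (ε : ℝ) (K : Set X) : dIter ε K 0 = K :=
  Ordinal.limitRecOn_zero ..

theorem dIter_add_one (ε : ℝ) (K : Set X) (α : Ordinal.{0}) :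
    dIter ε K (α + 1) = dSet ε (dIter ε K α) :=
  Ordinal.limitRecOn_add_one ..

theorem dIter_limit (ε : ℝ) (K : Set X) {α : Ordinal.{0}} (h : Order.IsSuccLimit α) :
    dIter ε K α = ⋂ (β : Ordinal.{0}) (_ : β < α), dIter ε K β :=
  Ordinal.limitRecOn_limit _ _ _ _ h

theorem dIter_subset (ε : ℝ) (K : Set X) (α : Ordinal.{0}) : dIter ε K α ⊆ K := by
  induction α using Ordinal.limitRecOn with
  | zero => rw [dIter_zero]
  | add_one o ih => rw [dIter_add_one]; exact sdiff_subset.trans ih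
  | limit o ho ih =>
    rw [dIter_limit _ _ ho]
    exact fun x hx => ih 0 ho.pos (mem_iInter₂.1 hx 0 ho.pos)

variable {Y : Type*} [NormedAddCommGroup Y] [NormedSpace ℝ Y]
  {K G : Set X} {L : Set Y} {ε c : ℝ}

theorem ContinuousLinearMap.mapsTo_dSet_inter (T : X →L[ℝ] Y) (hL : Bornology.IsBounded L)
    (hG : IsWeaklyOpen G) (hKL : MapsTo T (K ∩ G) L)
    (hdist : ∀ u ∈ K ∩ G, ∀ w ∈ K ∩ G, dist u w ≤ dist (T u) (T w) + c) :
    MapsTo T (dSet (ε + c) K ∩ G) (dSet ε L) := by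
  rintro x ⟨hx, hxG⟩
  refine ⟨hKL ⟨hx.1, hxG⟩, ?_⟩
  rintro ⟨V, ⟨hV, hVdiam⟩, hxV⟩
  refine hx.2 ⟨G ∩ T ⁻¹' V, ⟨hG.inter (hV.preimage T), ?_⟩, hxG, hxV⟩
  have hmaps : MapsTo T (G ∩ T ⁻¹' V ∩ K) (V ∩ L) := fun u hu => ⟨hu.1.2, hKL ⟨hu.2, hu.1.1⟩⟩
  have hc : 0 ≤ c := by simpa using hdist x ⟨hx.1, hxG⟩ x ⟨hx.1, hxG⟩
  calc diam (G ∩ T ⁻¹' V ∩ K) ≤ diam (V ∩ L) + c := by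
        refine diam_le_of_forall_dist_le (add_nonneg diam_nonneg hc) fun u hu w hw => ?_
        refine (hdist u ⟨hu.2, hu.1.1⟩ w ⟨hw.2, hw.1.1⟩).trans (add_le_add_left ?_ c)
        exact dist_le_diam_of_mem (hL.subset inter_subset_right) (hmaps hu) (hmaps hw)
    _ < ε + c := by linarith

theorem ContinuousLinearMap.mapsTo_dIter_inter (T : X →L[ℝ] Y) (hL : Bornology.IsBounded L)
    (hG : IsWeaklyOpen G) (hKL : MapsTo T (K ∩ G) L)
    (hdist : ∀ u ∈ K ∩ G, ∀ w ∈ K ∩ G, dist u w ≤ dist (T u) (T w) + c) (α : Ordinal.{0}) :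
    MapsTo T (dIter (ε + c) K α ∩ G) (dIter ε L α) := by
  induction α using Ordinal.limitRecOn with
  | zero => rwa [dIter_zero, dIter_zero]
  | add_one o ih =>
    rw [dIter_add_one, dIter_add_one]
    have hsub : dIter (ε + c) K o ∩ G ⊆ K ∩ G := inter_subset_inter_left _ (dIter_subset _ _ _)
    exact T.mapsTo_dSet_inter (hL.subset (dIter_subset _ _ _)) hG ih
      fun u hu w hw => hdist u (hsub hu) w (hsub hw)
  | limit o ho ih =>
    rw [dIter_limit _ _ ho, dIter_limit _ _ ho]
    exact fun x hx => mem_iInter₂.2 fun β hβ => ih β hβ ⟨mem_iInter₂.1 hx.1 β hβ, hx.2⟩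

end DerivedSets

section L1Sum

variable {E : ℕ → Type*} [∀ n, NormedAddCommGroup (E n)]

theorem lp.summable_norm_one (z : lp E 1) : Summable fun i => ‖z i‖ := by
  simpa only [ENNReal.toReal_one, Real.rpow_one] using (lp.memℓp z).summable (by norm_num)

theorem lp.norm_eq_tsum_norm_one (z : lp E 1) : ‖z‖ = ∑' i, ‖z i‖ := by
  rw [lp.norm_eq_tsum_rpow (by norm_num) z]
  simp only [ENNReal.toReal_one, Real.rpow_one, div_one]

theorem norm_Pfin_add_tsum_norm_tail (n : ℕ) (z : lp E 1) :
    ‖Pfin E n z‖ + ∑' i, ‖z (i + n)‖ = ‖z‖ := by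
  rw [PiLp.norm_eq_of_L1, lp.norm_eq_tsum_norm_one,
    ← (lp.summable_norm_one z).sum_add_tsum_nat_add n, ← Fin.sum_univ_eq_sum_range]
  rfl

theorem tsum_norm_tail_sub_le (n : ℕ) (u w : lp E 1) :
    ∑' i, ‖(u - w) (i + n)‖ ≤ ∑' i, ‖u (i + n)‖ + ∑' i, ‖w (i + n)‖ := by
  have htail (z : lp E 1) : Summable fun i => ‖z (i + n)‖ :=
    (summable_nat_add_iff n).2 (lp.summable_norm_one z)
  rw [← (htail u).tsum_add (htail w)]
  exact (htail (u - w)).tsum_le_tsum (fun i => norm_sub_le _ _) ((htail u).add (htail w))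

theorem Pfin_sub (n : ℕ) (u w : lp E 1) : Pfin E n (u - w) = Pfin E n u - Pfin E n w := rfl

theorem dist_le_dist_Pfin_add (n : ℕ) (u w : lp E 1) :
    dist u w ≤ dist (Pfin E n u) (Pfin E n w) + (‖u‖ - ‖Pfin E n u‖) + (‖w‖ - ‖Pfin E n w‖) := by
  have hu := norm_Pfin_add_tsum_norm_tail n u
  have hw := norm_Pfin_add_tsum_norm_tail n w
  have huw := norm_Pfin_add_tsum_norm_tail n (u - w)
  have htail := tsum_norm_tail_sub_le n u w
  rw [dist_eq_norm, dist_eq_norm, ← Pfin_sub]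
  linarith

theorem norm_Pfin_le (n : ℕ) (z : lp E 1) : ‖Pfin E n z‖ ≤ ‖z‖ := by
  rw [← norm_Pfin_add_tsum_norm_tail n z]
  exact le_add_of_nonneg_right (tsum_nonneg fun _ => norm_nonneg _)

variable (E) [∀ n, NormedSpace ℝ (E n)]

def PfinCLM (n : ℕ) : lp E 1 →L[ℝ] PiLp 1 (fun k : Fin n => E k) :=
  LinearMap.mkContinuous
    { toFun := Pfin E n
      map_add' := fun _ _ => rfl
      map_smul' := fun _ _ => rfl }
    1 fun z => (norm_Pfin_le n z).trans_eq (one_mul _).symm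

end L1Sum

theorem proj_mem_derived_of_mem_derived_general (E : ℕ → Type) [∀ n, NormedAddCommGroup (E n)]
    [∀ n, NormedSpace ℝ (E n)]
    (ε : ℝ)
    (z : lp E 1)
    (n : ℕ) (hn : 1 - ε < ‖Pfin E n z‖) (a : Ordinal.{0})
    (ha : z ∈ dIter (3 * ε) (Metric.closedBall (0 : lp E 1) 1) a) :
    Pfin E n z ∈ dIter ε (Pfin E n '' Metric.closedBall (0 : lp E 1) 1) a := by
  have hdist : ∀ u ∈ closedBall 0 1 ∩ {u | 1 - ε < ‖Pfin E n u‖},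
      ∀ w ∈ closedBall 0 1 ∩ {u | 1 - ε < ‖Pfin E n u‖},
        dist u w ≤ dist (Pfin E n u) (Pfin E n w) + 2 * ε := by
    rintro u ⟨hu1, hu : 1 - ε < ‖Pfin E n u‖⟩ w ⟨hw1, hw : 1 - ε < ‖Pfin E n w‖⟩
    rw [mem_closedBall_zero_iff] at hu1 hw1
    linarith [dist_le_dist_Pfin_add n u w]
  have hmaps := (PfinCLM E n).mapsTo_dIter_inter (ε := ε)
    ((PfinCLM E n).lipschitz.isBounded_image isBounded_closedBall)
    ((isWeaklyOpen_lt_norm (1 - ε)).preimage (PfinCLM E n))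
    ((mapsTo_image _ _).mono_left inter_subset_left) hdist a
  rw [show ε + 2 * ε = 3 * ε by ring] at hmaps
  exact hmaps ⟨ha, hn⟩

/-- **Lemma 3.8.** Let `X` be the `ℓ₁`-sum of Banach spaces `(X_n)`, `ε ∈ (0,1)`, `z ∈ B_X`
and `n` with `‖P_n z‖ > 1 - ε`. Then for every ordinal `α`, `z ∈ σ_{3ε}^α(B_X)` implies
`P_n z ∈ σ_ε^α(P_n B_X)`, the latter derivation taken in `(Σ_{k<n} X_k)_{ℓ₁}`. -/
theorem proj_mem_derived_of_mem_derived (E : ℕ → Type) [∀ n, NormedAddCommGroup (E n)]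
    [∀ n, NormedSpace ℝ (E n)] [∀ n, CompleteSpace (E n)]
    (ε : ℝ) (hε0 : 0 < ε) (hε1 : ε < 1)
    (z : lp E 1) (hz : z ∈ Metric.closedBall (0 : lp E 1) 1)
    (n : ℕ) (hn : 1 - ε < ‖Pfin E n z‖) (a : Ordinal.{0})
    (ha : z ∈ dIter (3 * ε) (Metric.closedBall (0 : lp E 1) 1) a) :
    Pfin E n z ∈ dIter ε (Pfin E n '' Metric.closedBall (0 : lp E 1) 1) a :=
  proj_mem_derived_of_mem_derived_general E ε z n hn a ha

end
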